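/- arXiv:2201.02930 — 2 statements merged into one kernel-verified Lean document; each statement's English description precedes it below -/
import Mathlib

section
/- Let a > 0. There exists a constant C(a) > 0 such that for every r₀ ∈ (0,1), setting R₀ = (1/6) √((a+1)/(2^a a)) (−log r₀)^{−a/2}, r₊ = r₀^{2^{2/a}} and r₋ = r₀^{(2/3)^{2/a}} (so that (−log r₊)^{a/2} = 2(−log r₀)^{a/2} and (−log r₋)^{a/2} = (2/3)(−log r₀)^{a/2}, and 0 < r₊ < r₋ < 1), one has ∫_{r₊}^{r₋} 2π a (a+1) dr / ( r (−log(r²))^{a+2} ) = C(a) · R₀^{2(a+1)/a}. -/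
/-!
With `g(r) = -log r²`, the integrand is the derivative of `π a g^{-(a+1)}`, so the area of the
annulus is `π a (g(r₋)^{-(a+1)} - g(r₊)^{-(a+1)})`. Both `g(r₊)` and `g(r₋)` are fixed multiples
of `-log r₀`, and so is `R₀^{-2/a}`; hence the area is a fixed positive multiple of
`(-log r₀)^{-(a+1)}`, that is, of `R₀^{2(a+1)/a}`.
-/

open Real intervalIntegral

lemma neg_log_sq_pos {r : ℝ} (hr : r ∈ Set.Ioo (0 : ℝ) 1) : 0 < -log (r ^ 2) :=
  neg_pos.2 (log_neg (pow_pos hr.1 2) (pow_lt_one₀ hr.1.le hr.2 two_ne_zero))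

lemma hasDerivAt_neg_log_sq_rpow {r : ℝ} (b : ℝ) (hr : r ∈ Set.Ioo (0 : ℝ) 1) :
    HasDerivAt (fun r => (-log (r ^ 2)) ^ (-b)) (2 * b / (r * (-log (r ^ 2)) ^ (b + 1))) r := by
  have hg := neg_log_sq_pos hr
  have hlog : HasDerivAt (fun r : ℝ => -log (r ^ 2)) (-(2 * r / r ^ 2)) r :=
    ((hasDerivAt_pow 2 r).log (pow_ne_zero 2 hr.1.ne')).neg.congr_deriv (by norm_num)
  refine ((hasDerivAt_rpow_const (p := -b) (Or.inl hg.ne')).comp r hlog).congr_deriv ?_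
  rw [show -b - 1 = -(b + 1) by ring, rpow_neg hg.le]
  field_simp [hr.1.ne']

lemma integral_mul_div_mul_neg_log_sq_rpow {s t : ℝ} (c b : ℝ) (hs : s ∈ Set.Ioo (0 : ℝ) 1)
    (ht : t ∈ Set.Ioo (0 : ℝ) 1) :
    ∫ r in s..t, c * b / (r * (-log (r ^ 2)) ^ (b + 1)) =
      c / 2 * ((-log (t ^ 2)) ^ (-b) - (-log (s ^ 2)) ^ (-b)) := by
  have hsub : Set.uIcc s t ⊆ Set.Ioo 0 1 := Set.ordConnected_Ioo.uIcc_subset hs ht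
  have hderiv : ∀ r ∈ Set.uIcc s t, HasDerivAt (fun r => c / 2 * (-log (r ^ 2)) ^ (-b))
      (c * b / (r * (-log (r ^ 2)) ^ (b + 1))) r := fun r hr =>
    ((hasDerivAt_neg_log_sq_rpow b (hsub hr)).const_mul (c / 2)).congr_deriv (by ring)
  have hcont : ContinuousOn (fun r => c * b / (r * (-log (r ^ 2)) ^ (b + 1))) (Set.uIcc s t) := by
    refine continuousOn_const.div (continuousOn_id.mul (ContinuousOn.rpow_const ?_ ?_)) ?_
    · exact ((continuousOn_id.pow 2).log fun r hr => pow_ne_zero 2 (hsub hr).1.ne').neg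
    · exact fun r hr => Or.inl (neg_log_sq_pos (hsub hr)).ne'
    · exact fun r hr => (mul_pos (hsub hr).1 (rpow_pos_of_pos (neg_log_sq_pos (hsub hr)) _)).ne'
  rw [integral_eq_sub_of_hasDerivAt hderiv hcont.intervalIntegrable]
  ring

lemma neg_log_rpow_rpow_rpow {x k p q : ℝ} (hx : x ∈ Set.Ioo (0 : ℝ) 1) (hk : 0 ≤ k)
    (hqp : q * p = 1) : (-log (x ^ k ^ q)) ^ p = k * (-log x) ^ p := by
  have hL : 0 ≤ -log x := neg_nonneg.2 (log_nonpos hx.1.le hx.2.le)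
  rw [log_rpow hx.1, ← mul_neg, mul_rpow (by positivity) hL, ← rpow_mul hk, hqp, rpow_one]

lemma neg_log_sq_rpow {x : ℝ} (hx : 0 < x) (c : ℝ) :
    -log ((x ^ c) ^ 2) = c * (2 * -log x) := by
  rw [log_pow, log_rpow hx]; push_cast; ring

lemma rpow_mem_Ioo_zero_one {x c : ℝ} (hx : x ∈ Set.Ioo (0 : ℝ) 1) (hc : 0 < c) :
    x ^ c ∈ Set.Ioo (0 : ℝ) 1 :=
  ⟨rpow_pos_of_pos hx.1 c, rpow_lt_one hx.1.le hx.2 hc⟩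

/-- Sharpness of the exponent in the main noncollapsing theorem (Example 3.1):
there is `C(a) > 0` such that for every `r₀ ∈ (0,1)`, with
`R₀ = (1/6)√((a+1)/(2^a a))(−log r₀)^{−a/2}`, `r₊ = r₀^{2^{2/a}}` and
`r₋ = r₀^{(2/3)^{2/a}}` (so `(−log r₊)^{a/2} = 2(−log r₀)^{a/2}`,
`(−log r₋)^{a/2} = (2/3)(−log r₀)^{a/2}` and `0 < r₊ < r₋ < 1`), the ω-area of the
annulus `{r₊ ≤ |z| ≤ r₋}` equals `C(a) · R₀^{2(a+1)/a}`. -/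
theorem annulus_area_sharp_exponent (a : ℝ) (ha : 0 < a) :
    ∃ C : ℝ, 0 < C ∧
      ∀ r₀ ∈ Set.Ioo (0 : ℝ) 1,
        let R₀ : ℝ := (1 / 6) * Real.sqrt ((a + 1) / (2 ^ a * a)) *
          (-Real.log r₀) ^ (-(a / 2))
        let rp : ℝ := r₀ ^ ((2 : ℝ) ^ (2 / a))
        let rm : ℝ := r₀ ^ (((2 : ℝ) / 3) ^ (2 / a))
        ((-Real.log rp) ^ (a / 2) = 2 * (-Real.log r₀) ^ (a / 2) ∧
          (-Real.log rm) ^ (a / 2) = (2 / 3) * (-Real.log r₀) ^ (a / 2) ∧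
          0 < rp ∧ rp < rm ∧ rm < 1) ∧
        (∫ r in rp..rm,
            2 * Real.pi * a * (a + 1) / (r * (-Real.log (r ^ 2)) ^ (a + 2))) =
          C * R₀ ^ (2 * (a + 1) / a) := by
  set cp : ℝ := (2 : ℝ) ^ (2 / a)
  set cm : ℝ := ((2 : ℝ) / 3) ^ (2 / a)
  set B : ℝ := (1 / 6) * sqrt ((a + 1) / (2 ^ a * a))
  have hcm : 0 < cm := by positivity
  have hcm_lt_cp : cm < cp := rpow_lt_rpow (by norm_num) (by norm_num) (by positivity)
  have hB : 0 < B := by positivity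
  have hqp : 2 / a * (a / 2) = 1 := by field_simp
  refine ⟨π * a * (cm ^ (-(a + 1)) - cp ^ (-(a + 1))) * 2 ^ (-(a + 1)) *
    (B ^ (2 * (a + 1) / a))⁻¹, ?_, ?_⟩
  · have := rpow_lt_rpow_of_neg hcm hcm_lt_cp (by linarith : -(a + 1) < 0)
    have : 0 < cm ^ (-(a + 1)) - cp ^ (-(a + 1)) := by linarith
    positivity
  intro r₀ hr₀
  have hL : 0 < -log r₀ := neg_pos.2 (log_neg hr₀.1 hr₀.2)
  have hrp := rpow_mem_Ioo_zero_one hr₀ (by positivity : 0 < cp)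
  have hrm := rpow_mem_Ioo_zero_one hr₀ hcm
  refine ⟨⟨neg_log_rpow_rpow_rpow hr₀ (by norm_num) hqp,
    neg_log_rpow_rpow_rpow hr₀ (by norm_num) hqp, hrp.1,
    rpow_lt_rpow_of_exponent_gt hr₀.1 hr₀.2 hcm_lt_cp, hrm.2⟩, ?_⟩
  have hR₀ : (B * (-log r₀) ^ (-(a / 2))) ^ (2 * (a + 1) / a) =
      B ^ (2 * (a + 1) / a) * (-log r₀) ^ (-(a + 1)) := by
    rw [mul_rpow hB.le (by positivity), ← rpow_mul hL.le]
    congr 2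
    field_simp
  rw [show a + 2 = a + 1 + 1 by ring, integral_mul_div_mul_neg_log_sq_rpow _ _ hrp hrm,
    neg_log_sq_rpow hr₀.1, neg_log_sq_rpow hr₀.1, mul_rpow hcm.le (by positivity),
    mul_rpow (by positivity : (0 : ℝ) ≤ cp) (by positivity), mul_rpow (by norm_num) hL.le, hR₀]
  field_simp
end

section
/- Let a > 0, p > 0 and define f(z) = a(a+1) / ( |z|² (−log(|z|²))^{a+2} ) for z ∈ ℂ with 0 < |z| < 1/2. Then the function z ↦ f(z) · (1 + |log f(z)|)^p is integrable on the punctured disk {z ∈ ℂ : 0 < |z| < 1/2} with respect to Lebesgue measure if and only if p < a + 1. -/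
/-!
Substituting `|z| = e^{-u}` turns the integral over the punctured disk into an integral over
`u ∈ (log 2, ∞)`. There `e^{-2u} f(e^{-u}) = a(a+1) (2u)^{-(a+2)}` and
`log f(e^{-u}) = 2u + O(log u)`, so the transformed integrand is `Θ(u^{p-(a+2)})`, which is
integrable at infinity exactly when `p - (a+2) < -1`.
-/

open Real MeasureTheory Set Filter Asymptotics

theorem integrableOn_fun_norm_punctured_ball {E F : Type*} [NormedAddCommGroup E]
    [NormedSpace ℝ E] [FiniteDimensional ℝ E] [Nontrivial E] [MeasurableSpace E] [BorelSpace E]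
    (μ : Measure E) [μ.IsAddHaarMeasure] [NormedAddCommGroup F] [NormedSpace ℝ F]
    {f : ℝ → F} {R : ℝ} :
    IntegrableOn (fun x : E => f ‖x‖) {x | 0 < ‖x‖ ∧ ‖x‖ < R} μ ↔
      IntegrableOn (fun y ↦ y ^ (Module.finrank ℝ E - 1) • f y) (Ioo 0 R) := by
  have hset : {x : E | 0 < ‖x‖ ∧ ‖x‖ < R} = Metric.ball 0 R \ {0} := by
    ext x; simp [norm_pos_iff, and_comm]
  rw [hset, integrableOn_congr_set_ae (sdiff_null_ae_eq_self (measure_singleton 0)),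
    integrableOn_fun_norm_addHaar]

theorem integrableOn_Ioo_exp_iff_integrableOn_Ioi {F : Type*} [NormedAddCommGroup F]
    [NormedSpace ℝ F] (f : ℝ → F) (c : ℝ) :
    IntegrableOn f (Ioo 0 (exp (-c))) ↔
      IntegrableOn (fun u => exp (-u) • f (exp (-u))) (Ioi c) := by
  have himage : (fun u => exp (-u)) '' Ioi c = Ioo 0 (exp (-c)) := by
    rw [← image_exp_Iio, ← neg_Ioi, ← image_neg_eq_neg, ← image_comp]; rfl
  have hderiv : ∀ u ∈ Ioi c, HasDerivWithinAt (fun u => exp (-u)) (-exp (-u)) (Ioi c) u :=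
    fun u _ => by simpa using ((hasDerivAt_neg u).exp).hasDerivWithinAt
  have hinj : InjOn (fun u => exp (-u)) (Ioi c) :=
    fun u _ v _ h => neg_injective (exp_injective h)
  rw [← himage, integrableOn_image_iff_integrableOn_abs_deriv_smul measurableSet_Ioi hderiv hinj]
  simp only [abs_neg, abs_of_pos (exp_pos _)]

theorem Asymptotics.IsTheta.integrableAtFilter_iff {α E F : Type*} [MeasurableSpace α]
    [NormedAddCommGroup E] [NormedAddCommGroup F] {f : α → E} {g : α → F} {l : Filter α}
    [l.IsMeasurablyGenerated] {μ : Measure α} (h : f =Θ[l] g)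
    (hf : StronglyMeasurableAtFilter f l μ) (hg : StronglyMeasurableAtFilter g l μ) :
    IntegrableAtFilter f l μ ↔ IntegrableAtFilter g l μ :=
  ⟨h.2.integrableAtFilter hg, h.1.integrableAtFilter hf⟩

theorem integrableOn_Ioi_iff_of_isTheta_rpow {E : Type*} [NormedAddCommGroup E] {f : ℝ → E}
    {c s : ℝ} (hf : ContinuousOn f (Ici c)) (h : f =Θ[atTop] fun u => u ^ s) :
    IntegrableOn f (Ioi c) ↔ s < -1 := by
  rw [← integrableOn_Ici_iff_integrableOn_Ioi, integrableOn_Ici_iff_integrableAtFilter_atTop,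
    h.integrableAtFilter_iff ⟨Ici c, Ici_mem_atTop c, hf.aestronglyMeasurable measurableSet_Ici⟩
      (measurable_id.pow_const s).aestronglyMeasurable.stronglyMeasurableAtFilter,
    integrableAtFilter_rpow_atTop_iff]
  exact and_iff_left (hf.locallyIntegrableOn measurableSet_Ici)

/-- The density `e^F` of `i∂∂̄(−log|z|²)^{−a}`, as a function of `r = |z|`. -/
noncomputable def cuspDensity (a r : ℝ) : ℝ := a * (a + 1) / (r ^ 2 * (-log (r ^ 2)) ^ (a + 2))

noncomputable def logOrliczFun (p t : ℝ) : ℝ := t * (1 + |log t|) ^ p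

section CuspDensity

variable {a : ℝ}

theorem cuspDensity_exp_neg (a : ℝ) {u : ℝ} :
    cuspDensity a (exp (-u)) = a * (a + 1) / (exp (-(2 * u)) * (2 * u) ^ (a + 2)) := by
  rw [cuspDensity, ← exp_nat_mul, log_exp]
  push_cast
  ring_nf

theorem cuspDensity_exp_neg_pos (ha : 0 < a) {u : ℝ} (hu : 0 < u) :
    0 < cuspDensity a (exp (-u)) := by
  rw [cuspDensity_exp_neg]; positivity

theorem log_cuspDensity_exp_neg (ha : 0 < a) {u : ℝ} (hu : 0 < u) :
    log (cuspDensity a (exp (-u))) = log (a * (a + 1)) + 2 * u - (a + 2) * log (2 * u) := by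
  rw [cuspDensity_exp_neg, log_div (by positivity) (by positivity),
    log_mul (exp_pos _).ne' (by positivity), log_exp, log_rpow (by positivity)]
  ring

theorem continuousOn_cuspDensity_exp_neg (a : ℝ) :
    ContinuousOn (fun u => cuspDensity a (exp (-u))) (Ioi 0) := by
  simp only [cuspDensity_exp_neg]
  refine continuousOn_const.div ?_ fun u (hu : 0 < u) => by positivity
  exact (continuous_exp.comp (by fun_prop)).continuousOn.mul
    (ContinuousOn.rpow_const (by fun_prop) fun u (hu : 0 < u) => Or.inl (by positivity))

theorem isTheta_one_add_abs_log_cuspDensity_exp_neg (ha : 0 < a) :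
    (fun u => 1 + |log (cuspDensity a (exp (-u)))|) =Θ[atTop] fun u => u := by
  have htwo : Tendsto (fun u : ℝ => 2 * u) atTop atTop := tendsto_id.const_mul_atTop two_pos
  have hsmall : (fun u => 1 + log (a * (a + 1)) - (a + 2) * log (2 * u)) =o[atTop]
      fun u => 2 * u :=
    ((isLittleO_const_id_atTop (1 + log (a * (a + 1)))).sub
      (isLittleO_log_id_atTop.const_mul_left (a + 2))).comp_tendsto htwo
  have hequiv : (fun u => 1 + log (cuspDensity a (exp (-u)))) ~[atTop] fun u => 2 * u := by
    refine (IsEquivalent.refl.add_isLittleO hsmall).congr_left ?_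
    filter_upwards [eventually_gt_atTop 0] with u hu
    simp only [Pi.add_apply, log_cuspDensity_exp_neg ha hu]
    ring
  have habs : (fun u => 1 + log (cuspDensity a (exp (-u)))) =ᶠ[atTop]
      fun u => 1 + |log (cuspDensity a (exp (-u)))| := by
    filter_upwards [(hequiv.symm.tendsto_atTop htwo).eventually_ge_atTop 1] with u hu
    rw [abs_of_nonneg (by linarith)]
  exact (habs.symm.trans_isTheta hequiv.isTheta).trans
    ((isTheta_refl _ _).const_mul_left two_ne_zero)

theorem isTheta_logOrliczFun_cuspDensity_exp_neg (ha : 0 < a) (p : ℝ) :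
    (fun u => exp (-u) * exp (-u) * logOrliczFun p (cuspDensity a (exp (-u)))) =Θ[atTop]
      fun u => u ^ (p - (a + 2)) := by
  have hweight : (fun u => exp (-u) * exp (-u) * cuspDensity a (exp (-u))) =Θ[atTop]
      fun u => u ^ (-(a + 2)) := by
    refine EventuallyEq.trans_isTheta ?_ ((isTheta_refl _ _).const_mul_left
      (by positivity : a * (a + 1) * 2 ^ (-(a + 2)) ≠ 0))
    filter_upwards [eventually_gt_atTop 0] with u hu
    have hexp : exp (-u) * exp (-u) = exp (-(2 * u)) := by rw [← exp_add]; ring_nf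
    rw [cuspDensity_exp_neg, hexp, mul_rpow zero_le_two hu.le, rpow_neg zero_le_two,
      rpow_neg hu.le]
    field_simp
  have hlog := (isTheta_one_add_abs_log_cuspDensity_exp_neg ha).rpow (r := p)
    (Eventually.of_forall fun u => by positivity) (eventually_ge_atTop 0)
  refine EventuallyEq.trans_isTheta (Eventually.of_forall fun u => ?_)
    ((hweight.mul hlog).trans_eventuallyEq ?_)
  · simp only [logOrliczFun]; ring
  · filter_upwards [eventually_gt_atTop 0] with u hu
    rw [← rpow_add hu]; ring_nf

theorem continuousOn_logOrliczFun_cuspDensity_exp_neg (ha : 0 < a) (p : ℝ) :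
    ContinuousOn (fun u => exp (-u) * exp (-u) * logOrliczFun p (cuspDensity a (exp (-u))))
      (Ioi 0) := by
  have hD := continuousOn_cuspDensity_exp_neg a
  have hlog := hD.log fun u hu => (cuspDensity_exp_neg_pos ha hu).ne'
  exact (by fun_prop : Continuous fun u => exp (-u) * exp (-u)).continuousOn.mul
    (hD.mul ((hlog.abs.const_add 1).rpow_const fun u _ => Or.inl (by positivity)))

end CuspDensity

theorem orlicz_integrability_iff_general (a p : ℝ) (ha : 0 < a) :
    (IntegrableOn
        (fun z : ℂ =>
          (a * (a + 1) / (‖z‖ ^ 2 * (-Real.log (‖z‖ ^ 2)) ^ (a + 2))) *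
            (1 + |Real.log (a * (a + 1) /
              (‖z‖ ^ 2 * (-Real.log (‖z‖ ^ 2)) ^ (a + 2)))|) ^ p)
        {z : ℂ | 0 < ‖z‖ ∧ ‖z‖ < 1 / 2} volume) ↔
      p < a + 1 := by
  have hhalf : (1 / 2 : ℝ) = exp (-log 2) := by rw [exp_neg, exp_log two_pos, one_div]
  change IntegrableOn (fun z : ℂ => logOrliczFun p (cuspDensity a ‖z‖)) _ _ ↔ _
  rw [integrableOn_fun_norm_punctured_ball volume
      (f := fun r => logOrliczFun p (cuspDensity a r)),
    hhalf, integrableOn_Ioo_exp_iff_integrableOn_Ioi]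
  simp only [Complex.finrank_real_complex, Nat.add_one_sub_one, pow_one, smul_eq_mul,
    ← mul_assoc]
  rw [integrableOn_Ioi_iff_of_isTheta_rpow
    ((continuousOn_logOrliczFun_cuspDensity_exp_neg ha p).mono
      (Ici_subset_Ioi.2 (log_pos one_lt_two)))
    (isTheta_logOrliczFun_cuspDensity_exp_neg ha p)]
  constructor <;> intro <;> linarith

/-- The `L¹(log L)^p` integrability threshold in Example 3.1: with
`f(z) = a(a+1)/(|z|²(−log(|z|²))^{a+2})` on the punctured disk
`{0 < |z| < 1/2}`, the function `f(1+|log f|)^p` is Lebesgue-integrable there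
if and only if `p < a + 1`. -/
theorem orlicz_integrability_iff (a p : ℝ) (ha : 0 < a) (hp : 0 < p) :
    (IntegrableOn
        (fun z : ℂ =>
          (a * (a + 1) / (‖z‖ ^ 2 * (-Real.log (‖z‖ ^ 2)) ^ (a + 2))) *
            (1 + |Real.log (a * (a + 1) /
              (‖z‖ ^ 2 * (-Real.log (‖z‖ ^ 2)) ^ (a + 2)))|) ^ p)
        {z : ℂ | 0 < ‖z‖ ∧ ‖z‖ < 1 / 2} volume) ↔
      p < a + 1 :=
  orlicz_integrability_iff_general a p ha
end
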